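/- arXiv:2205.15498 — 2 statements merged into one kernel-verified Lean document; each statement's English description precedes it below -/
import Mathlib

section
/- Let p be a prime with p ≡ 5 (mod 24), let ω be a primitive element of 𝔽_p, set C_i = ω^i⟨ω⁴⟩ for i = 0,1,2,3 (subscripts read modulo 4), and let ε ∈ {1,3} be the index with −2 ∈ C_ε. Then the Hadamard matrix H_{NV^(1)(p)} is equivalent to H(C₂ ∪ C_{2+ε}, C₀ ∪ C_{ε+2}), and the Hadamard matrix H_{NV^(−1)(p)} is equivalent to H(C₀ ∪ C_ε, C₂ ∪ C_ε). -/
open Matrix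

/-- Entry `χ(c)` where `b - a = c²` is a nonzero square (value `1` if `c` can be chosen a
square, i.e. `b - a` is a nonzero fourth power, `-1` if `b - a` is a nonzero square that is
not a fourth power, and `0` otherwise). -/
def RX (p : ℕ) [NeZero p] : Matrix (ZMod p) (ZMod p) ℤ :=
  Matrix.of fun a b =>
    if ∃ c : ZMod p, c ≠ 0 ∧ c ^ 2 = b - a ∧ ∃ d : ZMod p, d ^ 2 = c then 1
    else if ∃ c : ZMod p, c ≠ 0 ∧ c ^ 2 = b - a then -1
    else 0

def RY (p : ℕ) [NeZero p] : Matrix (ZMod p) (ZMod p) ℤ :=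
  Matrix.of fun a b =>
    if ∃ c : ZMod p, c ≠ 0 ∧ c ^ 2 = 2 * (b - a) ∧ ∃ d : ZMod p, d ^ 2 = c then 1
    else if ∃ c : ZMod p, c ≠ 0 ∧ c ^ 2 = 2 * (b - a) then -1
    else 0

def Xmat (p : ℕ) [NeZero p] : Matrix (Option (ZMod p)) (Option (ZMod p)) ℤ :=
  Matrix.of fun i j =>
    match i, j with
    | none, none => 0
    | none, some _ => 1
    | some _, none => -1
    | some a, some b => RX p a b

def Ymat (p : ℕ) [NeZero p] : Matrix (Option (ZMod p)) (Option (ZMod p)) ℤ :=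
  Matrix.of fun i j =>
    match i, j with
    | none, _ => 0
    | some _, none => 0
    | some a, some b => RY p a b

/-- Index set of the length `2(p+1)` code. -/
abbrev NVIdx (p : ℕ) := Option (ZMod p) ⊕ Option (ZMod p)

def Bw (p : ℕ) [NeZero p] : Matrix (NVIdx p) (NVIdx p) ℤ :=
  Matrix.fromBlocks (Xmat p) (Ymat p) (-(Ymat p)ᵀ) (Xmat p)ᵀ

/-- Generator matrix `a I + B_w` (over `ℤ`). -/
def NVgen (p : ℕ) [NeZero p] (a : ℤ) : Matrix (NVIdx p) (NVIdx p) ℤ :=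
  a • (1 : Matrix (NVIdx p) (NVIdx p) ℤ) + Bw p

/-- The ternary code `NV^(a)(p)`: the row space over `𝔽₃` of `a I + B_w` reduced mod 3. -/
def NVcode (p : ℕ) [NeZero p] (a : ℤ) : Submodule (ZMod 3) (NVIdx p → ZMod 3) :=
  Submodule.span (ZMod 3) (Set.range fun i => ((NVgen p a).map (Int.cast : ℤ → ZMod 3)) i)

/-- The matrix `H_{NV^(a)(p)}`. -/
def Hnv (p : ℕ) [NeZero p] (a : ℤ) : Matrix (NVIdx p) (NVIdx p) ℤ :=
  Matrix.fromBlocks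
    (Xmat p - (Ymat p)ᵀ + a • 1) (Ymat p + (Xmat p)ᵀ + a • 1)
    (-(Ymat p)ᵀ - Xmat p - a • 1) ((Xmat p)ᵀ - Ymat p + a • 1)

/-- Weight of a ternary vector: the number of nonzero coordinates. -/
def wt {ι : Type*} [Fintype ι] (v : ι → ZMod 3) : ℕ :=
  (Finset.univ.filter fun i => v i ≠ 0).card

/-- `H` is a Hadamard matrix of order `n`. -/
def IsHadamard {ι : Type*} [Fintype ι] [DecidableEq ι] (n : ℕ) (H : Matrix ι ι ℤ) : Prop :=
  (∀ i j, H i j = 1 ∨ H i j = -1) ∧ H * Hᵀ = (n : ℤ) • (1 : Matrix ι ι ℤ)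
/-- The type-1 matrix of a subset `D ⊆ G` (for a fixed ordering of `G`, here the indexing of
rows and columns by `G` itself): entry `(i, j)` is `1` if `j - i ∈ D` and `-1` otherwise. -/
def type1 {G : Type*} [AddCommGroup G] [DecidableEq G] (D : Finset G) : Matrix G G ℤ :=
  Matrix.of fun i j => if j - i ∈ D then 1 else -1

/-- The matrix
`H(D₁,D₂) = [[1, 1, 𝟙, -𝟙], [-1, 1, -𝟙, -𝟙], [-𝟙ᵀ, 𝟙ᵀ, -M₁, -M₂], [𝟙ᵀ, 𝟙ᵀ, M₂ᵀ, -M₁ᵀ]]`,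
where `M₁`, `M₂` are the type-1 matrices of `D₁`, `D₂`. -/
def HSDS {G : Type*} [AddCommGroup G] [DecidableEq G] (D₁ D₂ : Finset G) :
    Matrix (Fin 2 ⊕ (G ⊕ G)) (Fin 2 ⊕ (G ⊕ G)) ℤ :=
  Matrix.fromBlocks
    !![1, 1; -1, 1]
    (Matrix.of fun i j =>
      if i = 0 then Sum.elim (fun _ => (1 : ℤ)) (fun _ => -1) j else -1)
    (Matrix.of fun i j =>
      Sum.elim (fun _ => if j = 0 then (-1 : ℤ) else 1) (fun _ => 1) i)
    (Matrix.fromBlocks (-(type1 D₁)) (-(type1 D₂)) (type1 D₂)ᵀ (-(type1 D₁)ᵀ))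

/-- `P` is a monomial matrix with nonzero entries in `{1, -1}`. -/
def IsSignedPerm {κ : Type*} [DecidableEq κ] (P : Matrix κ κ ℤ) : Prop :=
  ∃ σ : Equiv.Perm κ, ∃ s : κ → ℤ, (∀ i, s i = 1 ∨ s i = -1) ∧
    ∀ i j, P i j = if j = σ i then s i else 0

/-- Two (Hadamard) matrices, possibly indexed by different types, are equivalent if one is
obtained from the other by a relabelling of indices together with left and right
multiplication by `{1, -1}`-monomial matrices. -/
def HadEquiv {ι κ : Type*} [Fintype ι] [Fintype κ] [DecidableEq ι] [DecidableEq κ]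
    (H : Matrix ι ι ℤ) (K : Matrix κ κ ℤ) : Prop :=
  ∃ e : ι ≃ κ, ∃ P Q : Matrix κ κ ℤ, IsSignedPerm P ∧ IsSignedPerm Q ∧
    K = P * (Matrix.reindex e e H) * Q

/-- The coset `C_i = ω^i ⟨ω⁴⟩` of the subgroup `⟨ω⁴⟩` of `𝔽_p^×`, viewed inside `𝔽_p`. -/
noncomputable def Cset (p : ℕ) [NeZero p] (ω : (ZMod p)ˣ) (i : ℕ) : Finset (ZMod p) :=
  open scoped Classical in
  Finset.univ.filter fun x =>
    ∃ c ∈ Subgroup.zpowers (ω ^ 4), x = (ω : ZMod p) ^ i * ((c : (ZMod p)ˣ) : ZMod p)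

/-!
Every nonzero `x ∈ 𝔽_p` is a power `ω ^ n`, and since `4 ∣ p - 1` the class of `n` modulo 4 is
well defined: it is the index of the coset `C_k` containing `x`. Both conditions in the definition
of `RX` and `RY` (being a square, being a fourth power) only depend on this class, so the entries
of `RX` and `RY` at `(s, t)` are read off from the class of `t - s` or `2 (t - s)`. As
`p ≡ 5 (mod 8)`, `-1 ∈ C₂`, hence `s - t` and `2 (t - s)` lie in the classes shifted by `2` and
`ε + 2`. So the `p × p` cores of the blocks `X - Yᵀ + aI` and `Y + Xᵀ + aI` of `H_{NV^(a)(p)}` are,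
up to sign, type-1 matrices of unions of two cosets, which is a check over the four classes. The
equivalence is then a relabelling of rows and columns, with row and column signs when `a = -1`.
-/

lemma isSignedPerm_diagonal {κ : Type*} [DecidableEq κ] {s : κ → ℤ}
    (hs : ∀ i, s i = 1 ∨ s i = -1) :
    IsSignedPerm (diagonal s) :=
  ⟨Equiv.refl κ, s, hs, fun i j => by simp [diagonal_apply, eq_comm]⟩

lemma hadEquiv_of_apply_eq_mul {ι κ : Type*} [Fintype ι] [Fintype κ] [DecidableEq ι]
    [DecidableEq κ] (H : Matrix ι ι ℤ) (K : Matrix κ κ ℤ) (e : ι ≃ κ) {u v : κ → ℤ}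
    (hu : ∀ i, u i = 1 ∨ u i = -1) (hv : ∀ i, v i = 1 ∨ v i = -1)
    (h : ∀ i j, K (e i) (e j) = u (e i) * H i j * v (e j)) : HadEquiv H K := by
  refine ⟨e, diagonal u, diagonal v, isSignedPerm_diagonal hu, isSignedPerm_diagonal hv, ?_⟩
  ext i j
  simpa using h (e.symm i) (e.symm j)

def nvIdxEquiv (p : ℕ) : NVIdx p ≃ Fin 2 ⊕ (ZMod p ⊕ ZMod p) where
  toFun
    | .inl none => .inl 0
    | .inl (some s) => .inr (.inl s)
    | .inr none => .inl 1
    | .inr (some s) => .inr (.inr s)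
  invFun
    | .inl j => if j = 0 then .inl none else .inr none
    | .inr (.inl s) => .inl (some s)
    | .inr (.inr s) => .inr (some s)
  left_inv := by rintro ((_ | s) | (_ | s)) <;> simp
  right_inv := by rintro ((j | (s | s))) <;> [fin_cases j <;> simp; rfl; rfl]

/-- `χ(c)` for any `c` with `c² ∈ C_k`; `0` when `C_k` contains no squares. -/
def quarticSign (k : ZMod 4) : ℤ := if k = 0 then 1 else if k = 2 then -1 else 0

lemma mem_Cset_iff {p : ℕ} [NeZero p] {ω : (ZMod p)ˣ} {x : ZMod p} {i : ℕ} :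
    x ∈ Cset p ω i ↔ ∃ j : ℤ, x = ((ω ^ ((i : ℤ) + 4 * j) : (ZMod p)ˣ) : ZMod p) := by
  simp [Cset, Subgroup.exists_mem_zpowers, _root_.zpow_add, _root_.zpow_mul]

section Cosets

variable {p : ℕ} [Fact p.Prime] {ω : (ZMod p)ˣ}

lemma zero_notMem_Cset (i : ℕ) : (0 : ZMod p) ∉ Cset p ω i := by
  rw [mem_Cset_iff]
  rintro ⟨j, hj⟩
  exact Units.ne_zero _ hj.symm

lemma exists_zpow_eq (hω : ∀ x : (ZMod p)ˣ, x ∈ Subgroup.zpowers ω) {x : ZMod p} (hx : x ≠ 0) :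
    ∃ n : ℤ, ((ω ^ n : (ZMod p)ˣ) : ZMod p) = x := by
  obtain ⟨n, hn⟩ := Subgroup.mem_zpowers_iff.mp (hω (Units.mk0 x hx))
  exact ⟨n, by rw [hn, Units.val_mk0]⟩

lemma orderOf_eq_sub_one_of_forall_mem_zpowers (hω : ∀ x : (ZMod p)ˣ, x ∈ Subgroup.zpowers ω) :
    orderOf ω = p - 1 := by
  rw [orderOf_eq_card_of_forall_mem_zpowers hω, Nat.card_eq_fintype_card, ZMod.card_units]

lemma intCast_eq_of_zpow_eq (hω : ∀ x : (ZMod p)ˣ, x ∈ Subgroup.zpowers ω) (h4 : 4 ∣ p - 1)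
    {m n : ℤ} (h : ((ω ^ m : (ZMod p)ˣ) : ZMod p) = ((ω ^ n : (ZMod p)ˣ) : ZMod p)) :
    (m : ZMod 4) = n := by
  have hmod := zpow_eq_zpow_iff_modEq.mp (Units.val_injective h)
  rw [orderOf_eq_sub_one_of_forall_mem_zpowers hω] at hmod
  exact (ZMod.intCast_eq_intCast_iff _ _ 4).mpr (hmod.of_dvd (Int.natCast_dvd_natCast.mpr h4))

lemma zpow_mem_Cset_iff (hω : ∀ x : (ZMod p)ˣ, x ∈ Subgroup.zpowers ω) (h4 : 4 ∣ p - 1)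
    (n : ℤ) (i : ℕ) : ((ω ^ n : (ZMod p)ˣ) : ZMod p) ∈ Cset p ω i ↔ (n : ZMod 4) = i := by
  rw [mem_Cset_iff]
  constructor
  · rintro ⟨j, hj⟩
    rw [intCast_eq_of_zpow_eq hω h4 hj]
    push_cast
    rw [show (4 : ZMod 4) = 0 from rfl, zero_mul, add_zero]
  · intro h
    obtain ⟨j, hj⟩ := (ZMod.intCast_eq_intCast_iff_dvd_sub (i : ℤ) n 4).mp
      (by exact_mod_cast h.symm)
    exact ⟨j, by rw [show n = i + 4 * j by push_cast at hj; omega]⟩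

lemma exists_sq_eq_zpow_iff (hω : ∀ x : (ZMod p)ˣ, x ∈ Subgroup.zpowers ω) (h4 : 4 ∣ p - 1)
    (n : ℤ) : (∃ c : ZMod p, c ≠ 0 ∧ c ^ 2 = ((ω ^ n : (ZMod p)ˣ) : ZMod p)) ↔
      (n : ZMod 4) = 0 ∨ (n : ZMod 4) = 2 := by
  constructor
  · rintro ⟨c, hc, hcn⟩
    obtain ⟨m, rfl⟩ := exists_zpow_eq hω hc
    rw [← Units.val_pow_eq_pow_val, ← zpow_natCast, ← _root_.zpow_mul] at hcn
    rw [← intCast_eq_of_zpow_eq hω h4 hcn]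
    push_cast
    generalize (m : ZMod 4) = k
    revert k; decide
  · intro h
    obtain ⟨m, rfl⟩ : 2 ∣ n := by
      rcases h with h | h
      · have := (ZMod.intCast_zmod_eq_zero_iff_dvd n 4).mp h
        omega
      · have := (ZMod.intCast_eq_intCast_iff_dvd_sub 2 n 4).mp (by simpa using h.symm)
        omega
    refine ⟨_, Units.ne_zero (ω ^ m), ?_⟩
    rw [← Units.val_pow_eq_pow_val, ← zpow_natCast, ← _root_.zpow_mul, mul_comm]
    rfl

lemma exists_fourth_pow_eq_zpow_iff (hω : ∀ x : (ZMod p)ˣ, x ∈ Subgroup.zpowers ω)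
    (h4 : 4 ∣ p - 1) (n : ℤ) :
    (∃ c : ZMod p, c ≠ 0 ∧ c ^ 2 = ((ω ^ n : (ZMod p)ˣ) : ZMod p) ∧ ∃ d : ZMod p, d ^ 2 = c) ↔
      (n : ZMod 4) = 0 := by
  constructor
  · rintro ⟨c, hc, hcn, d, rfl⟩
    obtain ⟨m, rfl⟩ := exists_zpow_eq hω ((pow_ne_zero_iff two_ne_zero).mp hc)
    rw [← Units.val_pow_eq_pow_val, ← Units.val_pow_eq_pow_val, ← zpow_natCast,
      ← zpow_natCast, ← _root_.zpow_mul, ← _root_.zpow_mul] at hcn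
    rw [← intCast_eq_of_zpow_eq hω h4 hcn]
    push_cast
    generalize (m : ZMod 4) = k
    revert k; decide
  · intro h
    obtain ⟨m, rfl⟩ : 4 ∣ n := by
      have := (ZMod.intCast_zmod_eq_zero_iff_dvd n 4).mp h
      omega
    refine ⟨_, Units.ne_zero (ω ^ (2 * m)), ?_, ((ω ^ m : (ZMod p)ˣ) : ZMod p), ?_⟩ <;>
      rw [← Units.val_pow_eq_pow_val, ← zpow_natCast, ← _root_.zpow_mul] <;> ring_nf

lemma quarticSign_eq_ite (hω : ∀ x : (ZMod p)ˣ, x ∈ Subgroup.zpowers ω) (h4 : 4 ∣ p - 1)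
    (n : ℤ) :
    (if ∃ c : ZMod p, c ≠ 0 ∧ c ^ 2 = ((ω ^ n : (ZMod p)ˣ) : ZMod p) ∧ ∃ d : ZMod p, d ^ 2 = c
      then 1 else if ∃ c : ZMod p, c ≠ 0 ∧ c ^ 2 = ((ω ^ n : (ZMod p)ˣ) : ZMod p) then -1
      else 0) = quarticSign n := by
  simp only [exists_fourth_pow_eq_zpow_iff hω h4, exists_sq_eq_zpow_iff hω h4, quarticSign]
  generalize (n : ZMod 4) = k
  revert k; decide

lemma RX_eq_quarticSign (hω : ∀ x : (ZMod p)ˣ, x ∈ Subgroup.zpowers ω) (h4 : 4 ∣ p - 1)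
    {s t : ZMod p} {n : ℤ} (h : t - s = ((ω ^ n : (ZMod p)ˣ) : ZMod p)) :
    RX p s t = quarticSign n := by
  rw [RX, of_apply, h, quarticSign_eq_ite hω h4]

lemma RY_eq_quarticSign (hω : ∀ x : (ZMod p)ˣ, x ∈ Subgroup.zpowers ω) (h4 : 4 ∣ p - 1)
    {s t : ZMod p} {n : ℤ} (h : 2 * (t - s) = ((ω ^ n : (ZMod p)ˣ) : ZMod p)) :
    RY p s t = quarticSign n := by
  rw [RY, of_apply, h, quarticSign_eq_ite hω h4]

lemma exists_zpow_eq_neg_one (hω : ∀ x : (ZMod p)ˣ, x ∈ Subgroup.zpowers ω) (hp : p % 8 = 5) :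
    ∃ r : ℤ, ((ω ^ r : (ZMod p)ˣ) : ZMod p) = -1 ∧ (r : ZMod 4) = 2 := by
  have hne : ω ^ (p / 2) ≠ 1 := fun h => by
    have := orderOf_le_of_pow_eq_one (by omega) h
    rw [orderOf_eq_sub_one_of_forall_mem_zpowers hω] at this
    omega
  have hval : (ω : ZMod p) ^ (p / 2) = -1 :=
    (ZMod.pow_div_two_eq_neg_one_or_one p (Units.ne_zero ω)).resolve_left
      fun h => hne (Units.ext (by simpa using h))
  refine ⟨(p / 2 : ℕ), by rw [zpow_natCast, Units.val_pow_eq_pow_val, hval], ?_⟩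
  exact_mod_cast (ZMod.natCast_eq_natCast_iff' (p / 2) 2 4).mpr (by omega)

lemma exists_RX_RY_eq_quarticSign (hω : ∀ x : (ZMod p)ˣ, x ∈ Subgroup.zpowers ω) (hp : p % 8 = 5)
    {ε : ℕ} (hm2 : (-2 : ZMod p) ∈ Cset p ω ε) {s t : ZMod p} (hst : s ≠ t) :
    ∃ k : ZMod 4, RX p s t = quarticSign k ∧ RX p t s = quarticSign (k + 2) ∧
      RY p s t = quarticSign (k + ε + 2) ∧ RY p t s = quarticSign (k + ε) ∧
      ∀ i : ℕ, t - s ∈ Cset p ω i ↔ k = i := by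
  have h4 : 4 ∣ p - 1 := by omega
  obtain ⟨n, hn⟩ := exists_zpow_eq hω (sub_ne_zero.mpr hst.symm)
  obtain ⟨r, hr, hr4⟩ := exists_zpow_eq_neg_one hω hp
  obtain ⟨m, hm⟩ := exists_zpow_eq hω (ne_of_mem_of_not_mem hm2 (zero_notMem_Cset ε))
  have hm4 : (m : ZMod 4) = ε := (zpow_mem_Cset_iff hω h4 m ε).mp (hm ▸ hm2)
  have hval (a b : ℤ) :
      ((ω ^ (a + b) : (ZMod p)ˣ) : ZMod p) = ↑(ω ^ a) * ↑(ω ^ b) := by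
    rw [_root_.zpow_add, Units.val_mul]
  have hts : s - t = ↑(ω ^ (n + r)) := by rw [hval, hn, hr]; ring
  have h2ts : 2 * (t - s) = ↑(ω ^ (n + m + r)) := by rw [hval, hval, hn, hm, hr]; ring
  have h2st : 2 * (s - t) = ↑(ω ^ (n + m)) := by rw [hval, hn, hm]; ring
  refine ⟨n, RX_eq_quarticSign hω h4 hn.symm, ?_, ?_, ?_, fun i => ?_⟩
  · rw [RX_eq_quarticSign hω h4 hts]; push_cast; rw [hr4]
  · rw [RY_eq_quarticSign hω h4 h2ts]; push_cast; rw [hr4, hm4]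
  · rw [RY_eq_quarticSign hω h4 h2st]; push_cast; rw [hm4]
  · rw [← hn, zpow_mem_Cset_iff hω h4]

theorem type1_Cset_union_eq_RX_RY (hω : ∀ x : (ZMod p)ˣ, x ∈ Subgroup.zpowers ω)
    (hp : p % 8 = 5) {ε : ℕ} (hε : ε = 1 ∨ ε = 3) (hm2 : (-2 : ZMod p) ∈ Cset p ω ε) :
    type1 (Cset p ω 2 ∪ Cset p ω (2 + ε)) = -(RX p - (RY p)ᵀ + 1) ∧
    type1 (Cset p ω 0 ∪ Cset p ω (ε + 2)) = -(RY p + (RX p)ᵀ + 1) ∧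
    type1 (Cset p ω 0 ∪ Cset p ω ε) = RX p - (RY p)ᵀ - 1 ∧
    type1 (Cset p ω 2 ∪ Cset p ω ε) = RY p + (RX p)ᵀ - 1 := by
  refine ⟨?_, ?_, ?_, ?_⟩ <;> ext s t <;>
    simp only [Matrix.add_apply, Matrix.sub_apply, Matrix.neg_apply, transpose_apply, one_apply,
      type1, of_apply, Finset.mem_union]
  all_goals
    obtain rfl | hst := eq_or_ne s t
    · simp [RX, RY, zero_notMem_Cset]
    obtain ⟨k, hRXst, hRXts, hRYst, hRYts, hmem⟩ := exists_RX_RY_eq_quarticSign hω hp hm2 hst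
    simp only [hRXst, hRXts, hRYst, hRYts, hmem, if_neg hst, quarticSign]
    clear hRXst hRXts hRYst hRYts hmem
    rcases hε with rfl | rfl <;> push_cast <;> revert k <;> decide

end Cosets

/-- for a prime `p ≡ 5 (mod 24)`, a primitive element `ω` of `𝔽_p` and
`ε ∈ {1, 3}` with `-2 ∈ C_ε`: the Hadamard matrix `H_{NV^(1)(p)}` is equivalent to
`H(C₂ ∪ C_{2+ε}, C₀ ∪ C_{ε+2})`, and `H_{NV^(-1)(p)}` is equivalent to
`H(C₀ ∪ C_ε, C₂ ∪ C_ε)` (subscripts read modulo 4). -/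
theorem Hnv_equiv_HSDS (p : ℕ) [Fact p.Prime] (hp : p % 24 = 5)
    (ω : (ZMod p)ˣ) (hω : ∀ x : (ZMod p)ˣ, x ∈ Subgroup.zpowers ω)
    (ε : ℕ) (hε : ε = 1 ∨ ε = 3) (hm2 : (-2 : ZMod p) ∈ Cset p ω ε) :
    HadEquiv (Hnv p 1)
      (HSDS (Cset p ω 2 ∪ Cset p ω (2 + ε)) (Cset p ω 0 ∪ Cset p ω (ε + 2))) ∧
    HadEquiv (Hnv p (-1))
      (HSDS (Cset p ω 0 ∪ Cset p ω ε) (Cset p ω 2 ∪ Cset p ω ε)) := by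
  obtain ⟨hA₁, hB₁, hA₂, hB₂⟩ := type1_Cset_union_eq_RX_RY hω (by omega) hε hm2
  constructor
  · refine hadEquiv_of_apply_eq_mul _ _ (nvIdxEquiv p) (u := 1) (v := 1)
      (fun _ => Or.inl rfl) (fun _ => Or.inl rfl) ?_
    rintro ((_|s)|(_|s)) ((_|t)|(_|t)) <;>
      simp [nvIdxEquiv, HSDS, Hnv, Xmat, Ymat, one_apply, hA₁, hB₁]
    ring
  · refine hadEquiv_of_apply_eq_mul _ _ (nvIdxEquiv p) (u := Sum.elim 1 (-1))
      (v := Sum.elim (-1) 1)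
      (by rintro (_|_) <;> simp) (by rintro (_|_) <;> simp) ?_
    rintro ((_|s)|(_|s)) ((_|t)|(_|t)) <;>
      simp [nvIdxEquiv, HSDS, Hnv, Xmat, Ymat, one_apply, hA₂, hB₂] <;> ring
end

section
/- Let p be a prime with p ≡ 5 (mod 24) and let a ∈ {1,−1}. Then the ternary code NV^(a)(p) of length 2(p+1) is self-dual: NV^(a)(p) = NV^(a)(p)^⊥. -/
open Matrix

/-!
Write `ψ s = χ c` for `s = c²` (well defined because `χ (-1) = 1`, and `0` off the squares), so
that `RX a b = ψ (b - a)` and `RY a b = ψ (2 (b - a))`. For `p ≡ 5 (mod 8)` the function `ψ` is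
odd, since `χ i = χ 2 = -1` when `i² = -1`; hence `X` and `Y` are skew, `B_w = [[X, Y], [Y, -X]]`,
and `B_w² = -p` follows from `X Y = Y X` and `X² + Y² = -p`. Off the diagonal the latter is the
correlation identity `∑ ψ(u) ψ(u + d) + ∑ ψ(u) ψ(u + 2d) = -1` for `d ≠ 0`: four times a
correlation is a sum of `χ(c e)` over the conic `e² - c² = d`, i.e. `∑ χ(d² - t⁴) - 1`, and the
quartic sums for `d` and `2d` add up to the Jacobi-type sum `2 ∑ χ(d² - u²) = -2` because
`χ 2 = -1`.

So `G = a + B_w` satisfies `G Gᵀ = 1 + p ≡ 0` and `G + Gᵀ = 2a`, a unit mod 3. Then the row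
space of `G` is self-orthogonal, and conversely `G x = 0` gives `x = Gᵀ ((2a)⁻¹ x)`.
-/

open Finset

section QuadraticCharSums

variable {F : Type*} [Field F] [Fintype F] [DecidableEq F]

local notation "χ" => quadraticChar F

theorem sum_quadraticChar_mul_sub (hF : ringChar F ≠ 2) {c : F} (hc : c ≠ 0) :
    ∑ x, χ x * χ (c - x) = -χ (-1) := by
  rw [← jacobiSum_nontrivial_inv (quadraticChar_ne_one hF),
    (quadraticChar_isQuadratic F).inv, jacobiSum,
    ← Fintype.sum_bijective _ (mulLeft_bijective₀ c hc) _ _ fun y => rfl]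
  refine sum_congr rfl fun y _ => ?_
  rw [show c - c * y = c * (1 - y) by ring, map_mul, map_mul,
    mul_mul_mul_comm, ← sq, quadraticChar_sq_one hc, one_mul]

theorem sum_quadraticChar_sq_sub_sq (hF : ringChar F ≠ 2) {d : F} (hd : d ≠ 0) :
    ∑ u, χ (d ^ 2 - u ^ 2) = -χ (-1) := by
  rw [← sum_quadraticChar_mul_sub hF (mul_ne_zero (Ring.two_ne_zero hF) hd),
    ← Fintype.sum_bijective _ (Equiv.addLeft d).bijective _ (fun x => χ x * χ (2 * d - x))
      fun u => rfl]
  refine sum_congr rfl fun u _ => ?_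
  rw [Equiv.coe_addLeft, ← map_mul]
  ring_nf

theorem sum_comp_sq (hF : ringChar F ≠ 2) (f : F → ℤ) :
    ∑ t, f (t ^ 2) = ∑ u, (χ u + 1) * f u := by
  rw [← sum_fiberwise_of_maps_to (g := fun t : F => t ^ 2) (fun _ _ => mem_univ _)]
  refine sum_congr rfl fun u _ => ?_
  rw [← quadraticChar_card_sqrts hF u, sum_congr rfl fun t ht => by rw [(mem_filter.1 ht).2],
    sum_const, nsmul_eq_mul, Set.toFinset_ofPred]

theorem sum_quadraticChar_sq_sub_pow_four_add (hF : ringChar F ≠ 2) (h₂ : χ 2 = -1) (d : F) :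
    ∑ t, χ (d ^ 2 - t ^ 4) + ∑ t, χ ((2 * d) ^ 2 - t ^ 4) = 2 * ∑ u, χ (d ^ 2 - u ^ 2) := by
  have h2 : (2 : F) ≠ 0 := Ring.two_ne_zero hF
  have hpow (e t : F) : e ^ 2 - t ^ 4 = e ^ 2 - (t ^ 2) ^ 2 := by ring
  simp only [hpow]
  rw [sum_comp_sq hF fun u => χ (d ^ 2 - u ^ 2), sum_comp_sq hF fun u => χ ((2 * d) ^ 2 - u ^ 2),
    ← Fintype.sum_bijective _ (mulLeft_bijective₀ 2 h2)
      (fun u => (χ (2 * u) + 1) * χ ((2 * d) ^ 2 - (2 * u) ^ 2))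
      (fun v => (χ v + 1) * χ ((2 * d) ^ 2 - v ^ 2)) fun u => rfl,
    ← sum_add_distrib, mul_sum]
  refine sum_congr rfl fun u _ => ?_
  rw [show (2 * d) ^ 2 - (2 * u) ^ 2 = (d ^ 2 - u ^ 2) * 2 ^ 2 by ring, map_mul (χ) _ (2 ^ 2),
    quadraticChar_sq_one' h2, map_mul, h₂]
  ring

theorem sum_quadraticChar_mul_filter_sq_sub_sq (hF : ringChar F ≠ 2) {d : F} (hd : d ≠ 0) :
    ∑ q ∈ univ.filter (fun q : F × F => q.2 ^ 2 - q.1 ^ 2 = d), χ (q.1 * q.2)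
      = ∑ t, χ (d ^ 2 - t ^ 4) - 1 := by
  have h2 : (2 : F) ≠ 0 := Ring.two_ne_zero hF
  have hsub {c e : F} (h : e ^ 2 - c ^ 2 = d) : e - c ≠ 0 := by
    rintro hec
    obtain rfl : e = c := sub_eq_zero.1 hec
    exact hd (by rw [← h, sub_self])
  have hzero : χ (d ^ 2 - 0 ^ 4) = 1 := by
    rw [zero_pow four_ne_zero, sub_zero, quadraticChar_sq_one' hd]
  rw [← hzero, ← sum_erase_eq_sub (mem_univ 0)]
  -- the conic `e² - c² = d` is parametrised by `t = e - c ≠ 0`, with `e + c = d / t`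
  refine sum_nbij' (fun q => q.2 - q.1) (fun t => ((d / t - t) / 2, (d / t + t) / 2))
    ?_ ?_ ?_ ?_ ?_
  · rintro ⟨c, e⟩ hq
    exact mem_erase.2 ⟨hsub (mem_filter.1 hq).2, mem_univ _⟩
  · intro t ht
    have ht0 : t ≠ 0 := ne_of_mem_erase ht
    simp only [mem_filter, mem_univ, true_and]
    field_simp
    ring
  · rintro ⟨c, e⟩ hq
    have hq' := (mem_filter.1 hq).2
    have hdiv : d / (e - c) = e + c := by
      rw [div_eq_iff (hsub hq'), ← hq']
      ring
    simp only [hdiv, Prod.mk.injEq]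
    constructor <;> field_simp <;> ring
  · intro t ht
    have ht0 : t ≠ 0 := ne_of_mem_erase ht
    field_simp
    ring
  · rintro ⟨c, e⟩ hq
    have hq' := (mem_filter.1 hq).2
    have hkey : d ^ 2 - (e - c) ^ 4 = c * e * (2 * (e - c)) ^ 2 := by
      rw [← hq']
      ring
    rw [hkey, map_mul χ _ (_ ^ 2), quadraticChar_sq_one' (mul_ne_zero h2 (hsub hq')), mul_one]

theorem quadraticChar_eq_of_sq_eq_neg_one (hF : ringChar F ≠ 2) {i : F} (hi : i ^ 2 = -1) :
    χ i = χ 2 := by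
  have h1i : 1 + i ≠ 0 := by
    intro h
    obtain rfl : i = -1 := by linear_combination h
    exact Ring.two_ne_zero hF (by linear_combination hi)
  have h := congrArg χ (show (1 + i) ^ 2 = 2 * i by linear_combination hi)
  rw [quadraticChar_sq_one' h1i, map_mul] at h
  have h2 : χ 2 * χ 2 = 1 := by
    rw [← sq, quadraticChar_sq_one (Ring.two_ne_zero hF)]
  linear_combination -(χ 2) * h - χ i * h2

end QuadraticCharSums

section ChiSqrt

variable {F : Type*} [Field F] [Fintype F] [DecidableEq F]

local notation "χ" => quadraticChar F

variable (F) in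
/-- `χ (√s)` when `-1` is a square (see `chiSqrt_sq`), and `0` off the nonzero squares. -/
def chiSqrt (s : F) : ℤ :=
  if ∃ c : F, c ≠ 0 ∧ c ^ 2 = s ∧ ∃ d : F, d ^ 2 = c then 1
  else if ∃ c : F, c ≠ 0 ∧ c ^ 2 = s then -1
  else 0

local notation "ψ" => chiSqrt F

theorem chiSqrt_eq_zero_of_not_isSquare {s : F} (hs : ¬IsSquare s) : ψ s = 0 := by
  have hno : ¬∃ c : F, c ≠ 0 ∧ c ^ 2 = s := fun ⟨c, _, hc⟩ => hs ⟨c, by rw [← hc, sq]⟩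
  rw [chiSqrt, if_neg fun ⟨c, hc0, hc, _⟩ => hno ⟨c, hc0, hc⟩, if_neg hno]

theorem chiSqrt_zero : ψ 0 = 0 := by
  rw [chiSqrt, if_neg, if_neg] <;> simp

theorem quadraticChar_add_one_mul_chiSqrt (u : F) : (χ u + 1) * ψ u = 2 * ψ u := by
  by_cases hu : IsSquare u
  · obtain ⟨c, rfl⟩ := hu
    by_cases hc : c = 0
    · rw [hc, mul_zero, chiSqrt_zero]
      ring
    rw [(quadraticChar_one_iff_isSquare (mul_self_ne_zero.2 hc)).2 ⟨c, rfl⟩]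
    ring
  rw [chiSqrt_eq_zero_of_not_isSquare hu]
  ring

section CardModEight

variable (hF : Fintype.card F % 8 = 5)
include hF

omit [DecidableEq F] in
theorem ringChar_ne_two_of_card_mod_eight : ringChar F ≠ 2 := by
  rw [Ne, FiniteField.even_card_iff_char_two]
  omega

theorem quadraticChar_neg_one_of_card_mod_eight : χ (-1) = 1 := by
  rw [quadraticChar_neg_one (ringChar_ne_two_of_card_mod_eight hF),
    ZMod.χ₄_nat_one_mod_four (by omega)]

theorem quadraticChar_two_of_card_mod_eight : χ 2 = -1 := by
  rw [quadraticChar_two (ringChar_ne_two_of_card_mod_eight hF), ZMod.χ₈_nat_eq_if_mod_eight]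
  simp [hF]
  omega

omit [DecidableEq F] in
theorem isSquare_neg_one_of_card_mod_eight : IsSquare (-1 : F) :=
  FiniteField.isSquare_neg_one_iff.2 (by omega)

theorem chiSqrt_sq (c : F) : ψ (c ^ 2) = χ c := by
  by_cases hc : c = 0
  · rw [hc, zero_pow two_ne_zero, chiSqrt_zero, MulChar.map_zero]
  by_cases hsq : IsSquare c
  · obtain ⟨r, rfl⟩ := hsq
    rw [chiSqrt, if_pos ⟨r * r, hc, rfl, r, sq r⟩,
      (quadraticChar_one_iff_isSquare hc).2 ⟨r, rfl⟩]
  have hno : ¬∃ c' : F, c' ≠ 0 ∧ c' ^ 2 = c ^ 2 ∧ ∃ d : F, d ^ 2 = c' := by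
    rintro ⟨c', -, hc', d, rfl⟩
    obtain ⟨i, hi⟩ := isSquare_neg_one_of_card_mod_eight hF
    rcases sq_eq_sq_iff_eq_or_eq_neg.1 hc' with rfl | h
    · exact hsq ⟨d, sq d⟩
    · exact hsq ⟨i * d, by linear_combination h + d ^ 2 * hi⟩
  rw [chiSqrt, if_neg hno, if_pos ⟨c, hc, rfl⟩,
    quadraticChar_neg_one_iff_not_isSquare.2 hsq]

theorem two_mul_chiSqrt (u : F) : 2 * ψ u = ∑ e, if e ^ 2 = u then χ e else 0 := by
  have h := sum_comp_sq (ringChar_ne_two_of_card_mod_eight hF) fun v => if v = u then ψ v else 0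
  simp only [mul_ite, mul_zero, sum_ite_eq', mem_univ, if_true,
    quadraticChar_add_one_mul_chiSqrt] at h
  rw [← h]
  refine sum_congr rfl fun e _ => ?_
  split_ifs with he
  · rw [chiSqrt_sq hF]
  · rfl

theorem chiSqrt_neg (u : F) : ψ (-u) = -ψ u := by
  obtain ⟨i, hi⟩ := isSquare_neg_one_of_card_mod_eight hF
  have hi2 : i ^ 2 = -1 := by rw [sq, hi]
  by_cases hu : IsSquare u
  · obtain ⟨c, rfl⟩ := hu
    rw [show -(c * c) = (i * c) ^ 2 by linear_combination (-c ^ 2) * hi2, ← sq, chiSqrt_sq hF,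
      chiSqrt_sq hF, map_mul, quadraticChar_eq_of_sq_eq_neg_one
        (ringChar_ne_two_of_card_mod_eight hF) hi2, quadraticChar_two_of_card_mod_eight hF]
    ring
  have hnu : ¬IsSquare (-u) := fun ⟨c, hc⟩ => hu ⟨i * c, by linear_combination -hc + c ^ 2 * hi⟩
  rw [chiSqrt_eq_zero_of_not_isSquare hu, chiSqrt_eq_zero_of_not_isSquare hnu, neg_zero]

theorem sum_chiSqrt_comp {f : F → F} (hf : Function.Bijective f) : ∑ t, ψ (f t) = 0 := by
  have h : ∑ u, ψ u = ∑ u, ψ (-u) :=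
    (Fintype.sum_bijective _ neg_involutive.bijective _ _ fun _ => rfl).symm
  rw [Fintype.sum_bijective f hf _ ψ fun _ => rfl]
  simp only [chiSqrt_neg hF, sum_neg_distrib] at h
  linarith

theorem two_mul_sum_chiSqrt_mul_self : 2 * ∑ u, ψ u * ψ u = Fintype.card F - 1 := by
  have hF2 := ringChar_ne_two_of_card_mod_eight hF
  calc 2 * ∑ u, ψ u * ψ u = ∑ u, (χ u + 1) * (ψ u * ψ u) := by
        rw [mul_sum]
        exact sum_congr rfl fun u _ => by
          rw [← mul_assoc, ← mul_assoc, quadraticChar_add_one_mul_chiSqrt]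
    _ = ∑ t, χ t * χ t := by
        rw [← sum_comp_sq hF2 fun u => ψ u * ψ u]
        simp only [chiSqrt_sq hF]
    _ = Fintype.card F - 1 := by
        rw [← sum_erase_add _ _ (mem_univ 0), MulChar.map_zero, mul_zero, add_zero,
          sum_congr rfl fun t ht => by rw [← sq, quadraticChar_sq_one (ne_of_mem_erase ht)],
          sum_const, card_erase_of_mem (mem_univ 0), card_univ, nsmul_one,
          Nat.cast_pred Fintype.card_pos]

theorem four_mul_sum_chiSqrt_mul_chiSqrt_add (d : F) :
    4 * ∑ u, ψ u * ψ (u + d)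
      = ∑ q ∈ univ.filter (fun q : F × F => q.2 ^ 2 - q.1 ^ 2 = d), χ (q.1 * q.2) := by
  have hF2 := ringChar_ne_two_of_card_mod_eight hF
  calc 4 * ∑ u, ψ u * ψ (u + d) = 2 * ∑ u, (χ u + 1) * (ψ u * ψ (u + d)) := by
        rw [mul_sum, mul_sum]
        refine sum_congr rfl fun u _ => ?_
        rw [← mul_assoc (χ u + 1), quadraticChar_add_one_mul_chiSqrt]
        ring
    _ = ∑ c, χ c * (2 * ψ (c ^ 2 + d)) := by
        rw [← sum_comp_sq hF2 fun u => ψ u * ψ (u + d), mul_sum]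
        refine sum_congr rfl fun c _ => ?_
        rw [chiSqrt_sq hF]
        ring
    _ = ∑ q ∈ univ.filter (fun q : F × F => q.2 ^ 2 - q.1 ^ 2 = d), χ (q.1 * q.2) := by
        simp only [two_mul_chiSqrt hF, mul_sum, mul_ite, mul_zero, sum_filter,
          sub_eq_iff_eq_add', ← map_mul]
        exact (Fintype.sum_prod_type' fun c e => if e ^ 2 = c ^ 2 + d then χ (c * e) else 0).symm

theorem sum_chiSqrt_mul_chiSqrt_add_add_two_mul {d : F} (hd : d ≠ 0) :
    ∑ u, ψ u * ψ (u + d) + ∑ u, ψ u * ψ (u + 2 * d) = -1 := by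
  have hF2 := ringChar_ne_two_of_card_mod_eight hF
  have h4 {e : F} (he : e ≠ 0) : 4 * ∑ u, ψ u * ψ (u + e) = ∑ t, χ (e ^ 2 - t ^ 4) - 1 := by
    rw [four_mul_sum_chiSqrt_mul_chiSqrt_add hF, sum_quadraticChar_mul_filter_sq_sub_sq hF2 he]
  have hpair := sum_quadraticChar_sq_sub_pow_four_add hF2 (quadraticChar_two_of_card_mod_eight hF) d
  rw [sum_quadraticChar_sq_sub_sq hF2 hd, quadraticChar_neg_one_of_card_mod_eight hF] at hpair
  linarith [h4 hd, h4 (mul_ne_zero (Ring.two_ne_zero hF2) hd)]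

theorem sum_chiSqrt_mul_sub_mul_chiSqrt_mul_sub {k : F} (hk : k ≠ 0) (a b : F) :
    ∑ t, ψ (k * (t - a)) * ψ (k * (b - t)) = -∑ u, ψ u * ψ (u + k * (a - b)) := by
  calc ∑ t, ψ (k * (t - a)) * ψ (k * (b - t))
      = ∑ t, -(ψ (k * (t - a)) * ψ (k * (t - a) + k * (a - b))) := by
        refine sum_congr rfl fun t _ => ?_
        rw [show k * (b - t) = -(k * (t - a) + k * (a - b)) by ring, chiSqrt_neg hF]
        ring
    _ = -∑ u, ψ u * ψ (u + k * (a - b)) := by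
        rw [sum_neg_distrib, Fintype.sum_bijective (fun t => k * (t - a))
          ((mulLeft_bijective₀ k hk).comp (Equiv.subRight a).bijective) _
          (fun u => ψ u * ψ (u + k * (a - b))) fun t => rfl]

end CardModEight
end ChiSqrt

section SkewBlocks

theorem fromBlocks_mul_self_of_commute {n R : Type*} [Fintype n] [Ring R]
    {A B : Matrix n n R} (h : Commute A B) :
    fromBlocks A B B (-A) * fromBlocks A B B (-A)
      = fromBlocks (A * A + B * B) 0 0 (A * A + B * B) := by
  simp only [fromBlocks_multiply, Matrix.mul_neg, Matrix.neg_mul, neg_neg, h.eq, add_neg_cancel,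
    add_comm (B * B)]

variable {n R : Type*} [Fintype n] [DecidableEq n] [CommRing R]

theorem smul_one_add_mul_transpose {B : Matrix n n R} (hB : Bᵀ = -B) (a : R) :
    (a • 1 + B) * (a • 1 + B)ᵀ = (a * a) • 1 - B * B := by
  rw [transpose_add, transpose_smul, transpose_one, hB, add_mul, mul_add, mul_add, mul_neg,
    mul_neg, smul_mul_smul, one_mul, smul_one_mul, mul_smul_one]
  abel

omit [Fintype n] in
theorem smul_one_add_add_transpose {B : Matrix n n R} (hB : Bᵀ = -B) (a : R) :
    (a • 1 + B) + (a • 1 + B)ᵀ = (2 * a) • 1 := by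
  rw [transpose_add, transpose_smul, transpose_one, hB, two_mul, add_smul]
  abel

theorem mem_span_range_iff_forall_dotProduct_eq_zero {G : Matrix n n R} {c : R}
    (hGG : G * Gᵀ = 0) (hc : IsUnit c) (hG : G + Gᵀ = c • 1) (x : n → R) :
    x ∈ Submodule.span R (Set.range G) ↔ ∀ y ∈ Submodule.span R (Set.range G), x ⬝ᵥ y = 0 := by
  have hspan : Submodule.span R (Set.range G) = LinearMap.range Gᵀ.mulVecLin :=
    (range_mulVecLin Gᵀ).symm
  constructor
  · rw [hspan]
    rintro ⟨u, rfl⟩ _ ⟨v, rfl⟩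
    rw [mulVecLin_apply, mulVecLin_apply, dotProduct_mulVec, vecMul_transpose, mulVec_mulVec,
      hGG, zero_mulVec, zero_dotProduct]
  · intro hx
    have hGx : G *ᵥ x = 0 := funext fun j => by
      rw [Pi.zero_apply, ← hx (G j) (Submodule.subset_span ⟨j, rfl⟩), dotProduct_comm]
      rfl
    obtain ⟨u, rfl⟩ := hc
    have hGt : Gᵀ *ᵥ x = (u : R) • x := by
      rw [eq_sub_of_add_eq' hG, sub_mulVec, smul_mulVec, one_mulVec, hGx, sub_zero]
    rw [hspan]
    exact ⟨(↑u⁻¹ : R) • x, by rw [mulVecLin_apply, mulVec_smul, hGt, smul_smul, Units.inv_mul,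
      one_smul]⟩

end SkewBlocks

section NVMatrices

variable {p : ℕ} [Fact p.Prime]

local notation "ψ" => chiSqrt (ZMod p)

theorem RX_apply (a b : ZMod p) : RX p a b = ψ (b - a) := rfl

theorem RY_apply (a b : ZMod p) : RY p a b = ψ (2 * (b - a)) := rfl

variable (hp : p % 8 = 5)
include hp

theorem card_zmod_mod_eight : Fintype.card (ZMod p) % 8 = 5 := by
  rwa [ZMod.card]

theorem Xmat_transpose : (Xmat p)ᵀ = -Xmat p := by
  ext (_ | a) (_ | b) <;>
    simp only [Xmat, RX_apply, transpose_apply, of_apply, Matrix.neg_apply, neg_zero, neg_neg]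
  rw [← neg_sub, chiSqrt_neg (card_zmod_mod_eight hp)]

theorem Ymat_transpose : (Ymat p)ᵀ = -Ymat p := by
  ext (_ | a) (_ | b) <;>
    simp only [Ymat, RY_apply, transpose_apply, of_apply, Matrix.neg_apply, neg_zero]
  rw [← neg_sub, mul_neg, chiSqrt_neg (card_zmod_mod_eight hp)]

theorem Xmat_mul_self_add_Ymat_mul_self :
    Xmat p * Xmat p + Ymat p * Ymat p = -(p : ℤ) • 1 := by
  have hF := card_zmod_mod_eight hp
  have h2 : (2 : ZMod p) ≠ 0 := Ring.two_ne_zero (ringChar_ne_two_of_card_mod_eight hF)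
  ext (_ | a) (_ | b) <;>
    simp only [Matrix.add_apply, Matrix.mul_apply, Fintype.sum_option, Matrix.smul_apply, Xmat,
      Ymat, RX_apply, RY_apply, Matrix.of_apply, one_apply, smul_eq_mul]
  · simp
  · simpa using sum_chiSqrt_comp hF (Equiv.subLeft b).bijective
  · simpa using sum_chiSqrt_comp hF (Equiv.subRight a).bijective
  have hX := sum_chiSqrt_mul_sub_mul_chiSqrt_mul_sub hF one_ne_zero a b
  simp only [one_mul] at hX
  rw [hX, sum_chiSqrt_mul_sub_mul_chiSqrt_mul_sub hF h2]
  by_cases hab : a = b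
  · subst hab
    have hsq := two_mul_sum_chiSqrt_mul_self hF
    simp only [sub_self, mul_zero, add_zero, if_true, ZMod.card] at hsq ⊢
    linarith
  · simp only [Option.some.injEq, hab, if_false]
    linarith [sum_chiSqrt_mul_chiSqrt_add_add_two_mul hF (sub_ne_zero.2 hab)]

theorem commute_Xmat_Ymat : Commute (Xmat p) (Ymat p) := by
  have hF := card_zmod_mod_eight hp
  have h2 : (2 : ZMod p) ≠ 0 := Ring.two_ne_zero (ringChar_ne_two_of_card_mod_eight hF)
  ext (_ | a) (_ | b) <;>
    simp only [Matrix.mul_apply, Fintype.sum_option, Xmat, Ymat, RX_apply, RY_apply,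
      Matrix.of_apply]
  · simp
  · simpa using sum_chiSqrt_comp hF ((mulLeft_bijective₀ 2 h2).comp (Equiv.subLeft b).bijective)
  · simpa using sum_chiSqrt_comp hF ((mulLeft_bijective₀ 2 h2).comp (Equiv.subRight a).bijective)
  simp only [mul_zero, zero_mul, zero_add]
  refine Fintype.sum_bijective (a + b - ·) (Equiv.subLeft (a + b)).bijective
    (fun t => ψ (t - a) * ψ (2 * (b - t))) (fun t => ψ (2 * (t - a)) * ψ (b - t)) fun t => ?_
  rw [mul_comm, show 2 * (a + b - t - a) = 2 * (b - t) by ring,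
    show b - (a + b - t) = t - a by ring]

theorem Bw_eq_fromBlocks : Bw p = fromBlocks (Xmat p) (Ymat p) (Ymat p) (-Xmat p) := by
  rw [Bw, Ymat_transpose hp, Xmat_transpose hp, neg_neg]

theorem Bw_transpose : (Bw p)ᵀ = -Bw p := by
  rw [Bw_eq_fromBlocks hp, fromBlocks_transpose, Xmat_transpose hp, Ymat_transpose hp,
    fromBlocks_neg, transpose_neg, Xmat_transpose hp]

theorem Bw_mul_self : Bw p * Bw p = -(p : ℤ) • 1 := by
  rw [Bw_eq_fromBlocks hp, fromBlocks_mul_self_of_commute (commute_Xmat_Ymat hp),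
    Xmat_mul_self_add_Ymat_mul_self hp, ← fromBlocks_one, fromBlocks_smul, smul_zero]

theorem NVgen_mul_transpose (a : ℤ) : NVgen p a * (NVgen p a)ᵀ = (a * a + p) • 1 := by
  rw [NVgen, smul_one_add_mul_transpose (Bw_transpose hp), Bw_mul_self hp, neg_smul,
    sub_neg_eq_add, add_smul]

theorem NVgen_add_transpose (a : ℤ) : NVgen p a + (NVgen p a)ᵀ = (2 * a) • 1 :=
  smul_one_add_add_transpose (Bw_transpose hp) a

end NVMatrices

/-- for a prime `p ≡ 5 (mod 24)` and `a ∈ {1, -1}`, the ternary code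
`NV^(a)(p)` of length `2(p+1)` is self-dual: it coincides with its dual code
`{x : ∀ y ∈ NV^(a)(p), x ⬝ y = 0}`. -/
theorem NVcode_self_dual (p : ℕ) [Fact p.Prime] (hp : p % 24 = 5)
    (a : ℤ) (ha : a = 1 ∨ a = -1) :
    ∀ x : NVIdx p → ZMod 3, x ∈ NVcode p a ↔ ∀ y ∈ NVcode p a, ∑ i, x i * y i = 0 := by
  have hp8 : p % 8 = 5 := by omega
  set f := Int.castRingHom (ZMod 3)
  have hGt : (f.mapMatrix (NVgen p a))ᵀ = f.mapMatrix (NVgen p a)ᵀ := (transpose_map ..).symm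
  refine mem_span_range_iff_forall_dotProduct_eq_zero (G := f.mapMatrix (NVgen p a))
    (c := f (2 * a)) ?_ ?_ ?_
  · rw [hGt, ← map_mul, NVgen_mul_transpose hp8, map_zsmul, map_one,
      ← Int.cast_smul_eq_zsmul (ZMod 3)]
    have h3 : (3 : ℤ) ∣ a * a + p := by rcases ha with rfl | rfl <;> omega
    rw [(ZMod.intCast_zmod_eq_zero_iff_dvd _ 3).2 h3, zero_smul]
  · exact Ne.isUnit (by rcases ha with rfl | rfl <;> decide)
  · rw [hGt, ← map_add, NVgen_add_transpose hp8, map_zsmul, map_one,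
      ← Int.cast_smul_eq_zsmul (ZMod 3)]
    rfl
end
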